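/- Let L be an N×N real symmetric matrix whose eigenvalues are all contained in the interval [0, λ_max], let s be a nonzero vector in ℝ^N, and let g : [0, λ_max] → ℝ be continuous. Let V_M be an N×M real matrix with orthonormal columns whose columns span the Krylov subspace K_M(L,s) = span{s, Ls, …, L^{M−1}s} and whose first column is s/‖s‖₂, and set H_M = V_Mᵀ L V_M. Then the Lanczos approximation g_M = ‖s‖₂ · V_M g(H_M) e₁ (where e₁ ∈ ℝ^M is the first standard unit vector) satisfies ‖g(L)s − g_M‖₂ ≤ 2‖s‖₂ · min over all polynomials p of degree at most M−1 of max over z ∈ [0, λ_max] of |g(z) − p(z)|. -/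

import Mathlib

open Matrix Polynomial

/-!
Polynomials of degree less than `M` are reproduced exactly: `V Vᵀ` fixes the Krylov space, so
`V (Vᵀ L V)ᵏ (‖s‖ e₁) = Lᵏ s` for `k < M`, hence `p(L) s = ‖s‖ V p(H) e₁`. The eigenvalues of
`H = Vᵀ L V` are convex combinations of those of `L` (the weights are the squared entries of the
orthogonal-columns matrix `Uᵀ V W`), so they lie in `[0, λ_max]`. Writing `g = (g - p) + p`, the
error becomes `(g - p)(L) s - ‖s‖ V (g - p)(H) e₁`, and an orthogonal conjugate of a diagonal
matrix has operator norm at most the largest absolute diagonal entry, which gives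
`‖s‖ max |g - p|` for each of the two terms.
-/

noncomputable def euclNorm {n : ℕ} (x : Fin n → ℝ) : ℝ := Real.sqrt (∑ i, x i ^ 2)

section EuclNorm

variable {n : ℕ}

lemma euclNorm_eq_norm (x : Fin n → ℝ) : euclNorm x = ‖WithLp.toLp 2 x‖ := by
  simp [euclNorm, EuclideanSpace.norm_eq, sq_abs]

lemma euclNorm_nonneg (x : Fin n → ℝ) : 0 ≤ euclNorm x := Real.sqrt_nonneg _

lemma euclNorm_eq_sqrt_dotProduct (x : Fin n → ℝ) : euclNorm x = √(x ⬝ᵥ x) := by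
  simp only [euclNorm, dotProduct, sq]

lemma euclNorm_eq_zero {x : Fin n → ℝ} : euclNorm x = 0 ↔ x = 0 := by
  rw [euclNorm_eq_norm, norm_eq_zero, WithLp.toLp_eq_zero]

lemma euclNorm_sub_le (x y : Fin n → ℝ) : euclNorm (x - y) ≤ euclNorm x + euclNorm y := by
  simpa only [euclNorm_eq_norm, WithLp.toLp_sub] using norm_sub_le _ _

lemma euclNorm_smul (c : ℝ) (x : Fin n → ℝ) : euclNorm (c • x) = |c| * euclNorm x := by
  rw [euclNorm_eq_norm, euclNorm_eq_norm, WithLp.toLp_smul, norm_smul, Real.norm_eq_abs]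

lemma euclNorm_single_one (i : Fin n) : euclNorm (Pi.single i 1) = 1 := by
  simp [euclNorm_eq_sqrt_dotProduct]

lemma dotProduct_mulVec_self_of_transpose_mul_self {m : ℕ} {A : Matrix (Fin m) (Fin n) ℝ}
    (hA : Aᵀ * A = 1) (x : Fin n → ℝ) : (A *ᵥ x) ⬝ᵥ (A *ᵥ x) = x ⬝ᵥ x := by
  rw [dotProduct_mulVec, ← mulVec_transpose, mulVec_mulVec, hA, one_mulVec]

lemma euclNorm_mulVec_of_transpose_mul_self {m : ℕ} {A : Matrix (Fin m) (Fin n) ℝ}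
    (hA : Aᵀ * A = 1) (x : Fin n → ℝ) : euclNorm (A *ᵥ x) = euclNorm x := by
  rw [euclNorm_eq_sqrt_dotProduct, euclNorm_eq_sqrt_dotProduct,
    dotProduct_mulVec_self_of_transpose_mul_self hA]

lemma euclNorm_diagonal_mulVec_le {d : Fin n → ℝ} {c : ℝ} (hd : ∀ i, |d i| ≤ c)
    (x : Fin n → ℝ) : euclNorm (diagonal d *ᵥ x) ≤ c * euclNorm x := by
  rcases isEmpty_or_nonempty (Fin n) with hn | ⟨⟨i⟩⟩
  · simp [euclNorm]
  have hc : 0 ≤ c := (abs_nonneg _).trans (hd i)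
  rw [euclNorm, euclNorm, ← Real.sqrt_sq hc, ← Real.sqrt_mul (sq_nonneg c), Finset.mul_sum]
  gcongr with j
  rw [mulVec_diagonal, mul_pow]
  exact mul_le_mul_of_nonneg_right (sq_le_sq' (abs_le.mp (hd j)).1 (abs_le.mp (hd j)).2)
    (sq_nonneg _)

lemma euclNorm_conj_diagonal_mulVec_le {U : Matrix (Fin n) (Fin n) ℝ} (hU : Uᵀ * U = 1)
    {d : Fin n → ℝ} {c : ℝ} (hd : ∀ i, |d i| ≤ c) (x : Fin n → ℝ) :
    euclNorm ((U * diagonal d * Uᵀ) *ᵥ x) ≤ c * euclNorm x := by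
  have hUt : Uᵀᵀ * Uᵀ = 1 := by rw [transpose_transpose, mul_eq_one_comm, hU]
  rw [← mulVec_mulVec, ← mulVec_mulVec, euclNorm_mulVec_of_transpose_mul_self hU,
    ← euclNorm_mulVec_of_transpose_mul_self hUt x]
  exact euclNorm_diagonal_mulVec_le hd _

lemma mulVec_euclNorm_smul_single {m : ℕ} {V : Matrix (Fin n) (Fin m) ℝ} {s : Fin n → ℝ}
    {j : Fin m} (hcol : ∀ i, V i j = s i / euclNorm s) :
    V *ᵥ (euclNorm s • Pi.single j 1) = s := by
  ext i
  -- at `s = 0` the quotient is the junk value `0 / 0 = 0`, which is still `s i`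
  have hs : euclNorm s = 0 → s i = 0 := fun h => by rw [euclNorm_eq_zero.mp h, Pi.zero_apply]
  simp [mulVec_smul, hcol, mul_div_cancel_of_imp' hs]

end EuclNorm

lemma aeval_conj_diagonal {n R : Type*} [Fintype n] [DecidableEq n] [CommRing R]
    {U : Matrix n n R} (hU : Uᵀ * U = 1) (d : n → R) (p : R[X]) :
    aeval (U * diagonal d * Uᵀ) p = U * diagonal (fun i => p.eval (d i)) * Uᵀ := by
  let u : (Matrix n n R)ˣ := ⟨U, Uᵀ, mul_eq_one_comm.mp hU, hU⟩
  let conj := MulSemiringAction.toAlgEquiv R (Matrix n n R) (ConjAct.toConjAct u)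
  have hconj (A : Matrix n n R) : conj A = U * A * Uᵀ := ConjAct.units_smul_def _ _
  simpa [hconj, aeval_pi_apply] using
    aeval_algHom_apply (conj.toAlgHom.comp (diagonalAlgHom R)) d p

lemma diagonal_mem_of_transpose_mul_diagonal_mul {m n : Type*} [Fintype m] [DecidableEq m]
    [Fintype n] [DecidableEq n] {B : Matrix m n ℝ} (hB : Bᵀ * B = 1) {Λ : m → ℝ} {μ : n → ℝ}
    (h : Bᵀ * diagonal Λ * B = diagonal μ) {S : Set ℝ} (hS : Convex ℝ S) (hΛ : ∀ j, Λ j ∈ S)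
    (i : n) : μ i ∈ S := by
  have hw : ∑ j, B j i ^ 2 = 1 := by simpa [mul_apply, sq] using congrFun (congrFun hB i) i
  have hμ : μ i = ∑ j, B j i ^ 2 • Λ j := by
    simpa [mul_apply, diagonal_apply, sq, mul_comm, mul_left_comm] using
      (congrFun (congrFun h i) i).symm
  rw [hμ]
  exact hS.sum_mem (fun j _ => sq_nonneg _) hw fun j _ => hΛ j

lemma compression_eigenvalue_mem {N M : ℕ} {L U : Matrix (Fin N) (Fin N) ℝ} {Λ : Fin N → ℝ}
    {V : Matrix (Fin N) (Fin M) ℝ} {W : Matrix (Fin M) (Fin M) ℝ} {μ : Fin M → ℝ}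
    (hU : Uᵀ * U = 1) (hV : Vᵀ * V = 1) (hW : Wᵀ * W = 1) (hL : L = U * diagonal Λ * Uᵀ)
    (hH : Vᵀ * L * V = W * diagonal μ * Wᵀ) {S : Set ℝ} (hS : Convex ℝ S)
    (hΛ : ∀ j, Λ j ∈ S) (i : Fin M) : μ i ∈ S := by
  refine diagonal_mem_of_transpose_mul_diagonal_mul (B := Uᵀ * V * W) ?_ ?_ hS hΛ i
  · have hUU : U * Uᵀ = 1 := mul_eq_one_comm.mp hU
    simp only [transpose_mul, transpose_transpose, Matrix.mul_assoc]
    rw [← Matrix.mul_assoc U, hUU, Matrix.one_mul, ← Matrix.mul_assoc Vᵀ, hV, Matrix.one_mul, hW]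
  · rw [transpose_mul, transpose_mul, transpose_transpose]
    calc Wᵀ * (Vᵀ * U) * diagonal Λ * (Uᵀ * V * W) = Wᵀ * (Vᵀ * L * V) * W := by
          rw [hL]; simp only [Matrix.mul_assoc]
      _ = (Wᵀ * W) * diagonal μ * (Wᵀ * W) := by rw [hH]; simp only [Matrix.mul_assoc]
      _ = diagonal μ := by rw [hW, Matrix.one_mul, Matrix.mul_one]

section Krylov

variable {R n m : Type*} [CommRing R] [Fintype n] [Fintype m] [DecidableEq m]
  {V : Matrix n m R}

lemma mulVec_transpose_mulVec_of_mem_span (hV : Vᵀ * V = 1) {x : n → R}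
    (hx : x ∈ Submodule.span R (Set.range V.col)) : V *ᵥ (Vᵀ *ᵥ x) = x := by
  rw [← range_mulVecLin] at hx
  obtain ⟨y, rfl⟩ := hx
  simp [mulVec_mulVec, hV]

lemma mulVec_compression_pow_mulVec [DecidableEq n] (hV : Vᵀ * V = 1) (L : Matrix n n R)
    {e : m → R} {k : ℕ}
    (hK : ∀ j ≤ k, L ^ j *ᵥ (V *ᵥ e) ∈ Submodule.span R (Set.range V.col)) :
    V *ᵥ ((Vᵀ * L * V) ^ k *ᵥ e) = L ^ k *ᵥ (V *ᵥ e) := by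
  induction k with
  | zero => simp
  | succ k ih =>
    calc V *ᵥ ((Vᵀ * L * V) ^ (k + 1) *ᵥ e)
        = V *ᵥ (Vᵀ *ᵥ (L *ᵥ (V *ᵥ ((Vᵀ * L * V) ^ k *ᵥ e)))) := by
          simp only [pow_succ', mulVec_mulVec, Matrix.mul_assoc]
      _ = V *ᵥ (Vᵀ *ᵥ (L ^ (k + 1) *ᵥ (V *ᵥ e))) := by
          rw [ih fun j hj => hK j (by omega), mulVec_mulVec (M := L), pow_succ']
      _ = L ^ (k + 1) *ᵥ (V *ᵥ e) := mulVec_transpose_mulVec_of_mem_span hV (hK _ le_rfl)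

lemma mulVec_aeval_compression_mulVec [DecidableEq n] (hV : Vᵀ * V = 1) (L : Matrix n n R)
    {e : m → R} {M : ℕ}
    (hK : ∀ j < M, L ^ j *ᵥ (V *ᵥ e) ∈ Submodule.span R (Set.range V.col)) {p : R[X]}
    (hp : p.natDegree < M) :
    V *ᵥ (aeval (Vᵀ * L * V) p *ᵥ e) = aeval L p *ᵥ (V *ᵥ e) := by
  simp only [aeval_eq_sum_range' hp, sum_mulVec, mulVec_sum, smul_mulVec, mulVec_smul]
  refine Finset.sum_congr rfl fun k hk => ?_
  rw [mulVec_compression_pow_mulVec hV L fun j hj => hK j ?_]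
  have := Finset.mem_range.mp hk
  omega

end Krylov

lemma euclNorm_conj_diagonal_sub_le {N M : ℕ} {U : Matrix (Fin N) (Fin N) ℝ}
    {V : Matrix (Fin N) (Fin M) ℝ} {W : Matrix (Fin M) (Fin M) ℝ} (hU : Uᵀ * U = 1)
    (hV : Vᵀ * V = 1) (hW : Wᵀ * W = 1) {Λ : Fin N → ℝ} {μ : Fin M → ℝ} {g : ℝ → ℝ}
    {p : ℝ[X]} {c : ℝ} (hcΛ : ∀ i, |g (Λ i) - p.eval (Λ i)| ≤ c)
    (hcμ : ∀ i, |g (μ i) - p.eval (μ i)| ≤ c) {s : Fin N → ℝ} {e : Fin M → ℝ}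
    (hexact : (U * diagonal (fun i => p.eval (Λ i)) * Uᵀ) *ᵥ s
      = V *ᵥ ((W * diagonal (fun i => p.eval (μ i)) * Wᵀ) *ᵥ e)) :
    euclNorm ((U * diagonal (fun i => g (Λ i)) * Uᵀ) *ᵥ s
        - V *ᵥ ((W * diagonal (fun i => g (μ i)) * Wᵀ) *ᵥ e))
      ≤ c * euclNorm s + c * euclNorm e := by
  have hsplit {k : ℕ} (X : Matrix (Fin k) (Fin k) ℝ) (a b : Fin k → ℝ) (x : Fin k → ℝ) :
      (X * diagonal a * Xᵀ) *ᵥ x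
        = (X * diagonal (a - b) * Xᵀ) *ᵥ x + (X * diagonal b * Xᵀ) *ᵥ x := by
    rw [← add_mulVec, ← add_mul, ← mul_add, diagonal_add]
    simp
  rw [hsplit U _ (fun i => p.eval (Λ i)), hsplit W _ (fun i => p.eval (μ i)), mulVec_add, hexact,
    add_sub_add_right_eq_sub]
  refine (euclNorm_sub_le _ _).trans (add_le_add ?_ ?_)
  · exact euclNorm_conj_diagonal_mulVec_le hU hcΛ s
  · rw [euclNorm_mulVec_of_transpose_mul_self hV]
    exact euclNorm_conj_diagonal_mulVec_le hW hcμ e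

theorem lanczos_error_bound_general
    (N M : ℕ) (hM : 0 < M)
    (L : Matrix (Fin N) (Fin N) ℝ)
    (lammax : ℝ)
    -- a spectral decomposition of L, with all eigenvalues in [0, λ_max]
    (U : Matrix (Fin N) (Fin N) ℝ) (Λ : Fin N → ℝ)
    (hU : Uᵀ * U = 1) (hLdec : L = U * Matrix.diagonal Λ * Uᵀ)
    (hΛ : ∀ i, Λ i ∈ Set.Icc (0 : ℝ) lammax)
    (s : Fin N → ℝ)
    -- a continuous function g : [0, λ_max] → ℝ
    (g : ℝ → ℝ) (hg : ContinuousOn g (Set.Icc 0 lammax))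
    -- V_M has orthonormal columns spanning the Krylov subspace K_M(L, s),
    -- and its first column is s / ‖s‖₂
    (V : Matrix (Fin N) (Fin M) ℝ)
    (hV : Vᵀ * V = 1)
    (hspan : Submodule.span ℝ (Set.range fun j : Fin M => Vᵀ j)
      = Submodule.span ℝ (Set.range fun k : Fin M => (L ^ (k : ℕ)) *ᵥ s))
    (hfirst : ∀ i, V i ⟨0, hM⟩ = s i / euclNorm s)
    -- a spectral decomposition of H_M = V_Mᵀ L V_M
    (W : Matrix (Fin M) (Fin M) ℝ) (μ : Fin M → ℝ)
    (hW : Wᵀ * W = 1) (hHdec : Vᵀ * L * V = W * Matrix.diagonal μ * Wᵀ) :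
    euclNorm ((U * Matrix.diagonal (fun i => g (Λ i)) * Uᵀ) *ᵥ s
        - euclNorm s • (V *ᵥ ((W * Matrix.diagonal (fun i => g (μ i)) * Wᵀ)
            *ᵥ fun j : Fin M => if j = ⟨0, hM⟩ then (1 : ℝ) else 0)))
      ≤ 2 * euclNorm s *
        sInf { e : ℝ | ∃ p : Polynomial ℝ, p.natDegree ≤ M - 1 ∧
          e = sSup ((fun z => |g z - p.eval z|) '' Set.Icc 0 lammax) } := by
  set e : Fin M → ℝ := euclNorm s • Pi.single ⟨0, hM⟩ 1 with he
  have hVe : V *ᵥ e = s := mulVec_euclNorm_smul_single hfirst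
  have hK : ∀ k < M, L ^ k *ᵥ (V *ᵥ e) ∈ Submodule.span ℝ (Set.range V.col) := fun k hk => by
    rw [hVe, show Set.range V.col = Set.range fun j : Fin M => Vᵀ j from rfl, hspan]
    exact Submodule.subset_span ⟨⟨k, hk⟩, rfl⟩
  have hμ := compression_eigenvalue_mem hU hV hW hLdec hHdec (convex_Icc 0 lammax) hΛ
  have hfirst_col : (fun j : Fin M => if j = ⟨0, hM⟩ then (1 : ℝ) else 0)
      = Pi.single ⟨0, hM⟩ 1 := by
    ext j; simp [Pi.single_apply]
  rw [hfirst_col, ← mulVec_smul, ← mulVec_smul, ← he, ← smul_eq_mul (2 * _),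
    ← Real.sInf_smul_of_nonneg (mul_nonneg zero_le_two (euclNorm_nonneg s))]
  refine le_csInf ⟨_, _, ⟨0, by simp, rfl⟩, rfl⟩ ?_
  rintro _ ⟨_, ⟨p, hp, rfl⟩, rfl⟩
  have hbdd : BddAbove ((fun z => |g z - p.eval z|) '' Set.Icc 0 lammax) :=
    isCompact_Icc.bddAbove_image (hg.sub p.continuousOn).abs
  have hexact := mulVec_aeval_compression_mulVec hV L hK (p := p) (by omega)
  rw [hVe, hHdec, aeval_conj_diagonal hW, hLdec, aeval_conj_diagonal hU] at hexact
  calc _ ≤ _ := euclNorm_conj_diagonal_sub_le hU hV hW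
          (fun i => le_csSup hbdd ⟨Λ i, hΛ i, rfl⟩) (fun i => le_csSup hbdd ⟨μ i, hμ i, rfl⟩)
          hexact.symm
    _ = _ := by
      simp only [smul_eq_mul]
      rw [he, euclNorm_smul, euclNorm_single_one, mul_one,
        abs_of_nonneg (euclNorm_nonneg s)]
      ring

/-- The Lanczos approximation error bound (Güttel, Cor. 3.4):
`‖g(L)s − g_M‖₂ ≤ 2‖s‖₂ · min_{p ∈ P_{M−1}} max_{z ∈ [0,λ_max]} |g(z) − p(z)|`,
where `g(L)` and `g(H_M)` are defined via spectral decompositions. -/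
theorem lanczos_error_bound
    (N M : ℕ) (hM : 0 < M)
    (L : Matrix (Fin N) (Fin N) ℝ) (hL : L.IsSymm)
    (lammax : ℝ)
    -- a spectral decomposition of L, with all eigenvalues in [0, λ_max]
    (U : Matrix (Fin N) (Fin N) ℝ) (Λ : Fin N → ℝ)
    (hU : Uᵀ * U = 1) (hLdec : L = U * Matrix.diagonal Λ * Uᵀ)
    (hΛ : ∀ i, Λ i ∈ Set.Icc (0 : ℝ) lammax)
    -- a nonzero vector s
    (s : Fin N → ℝ) (hs : s ≠ 0)
    -- a continuous function g : [0, λ_max] → ℝ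
    (g : ℝ → ℝ) (hg : ContinuousOn g (Set.Icc 0 lammax))
    -- V_M has orthonormal columns spanning the Krylov subspace K_M(L, s),
    -- and its first column is s / ‖s‖₂
    (V : Matrix (Fin N) (Fin M) ℝ)
    (hV : Vᵀ * V = 1)
    (hspan : Submodule.span ℝ (Set.range fun j : Fin M => Vᵀ j)
      = Submodule.span ℝ (Set.range fun k : Fin M => (L ^ (k : ℕ)) *ᵥ s))
    (hfirst : ∀ i, V i ⟨0, hM⟩ = s i / euclNorm s)
    -- a spectral decomposition of H_M = V_Mᵀ L V_M
    (W : Matrix (Fin M) (Fin M) ℝ) (μ : Fin M → ℝ)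
    (hW : Wᵀ * W = 1) (hHdec : Vᵀ * L * V = W * Matrix.diagonal μ * Wᵀ) :
    euclNorm ((U * Matrix.diagonal (fun i => g (Λ i)) * Uᵀ) *ᵥ s
        - euclNorm s • (V *ᵥ ((W * Matrix.diagonal (fun i => g (μ i)) * Wᵀ)
            *ᵥ fun j : Fin M => if j = ⟨0, hM⟩ then (1 : ℝ) else 0)))
      ≤ 2 * euclNorm s *
        sInf { e : ℝ | ∃ p : Polynomial ℝ, p.natDegree ≤ M - 1 ∧
          e = sSup ((fun z => |g z - p.eval z|) '' Set.Icc 0 lammax) } :=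
  lanczos_error_bound_general N M hM L lammax U Λ hU hLdec hΛ s g hg V hV hspan hfirst W μ hW hHdec
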